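/- For $0 < a < 1/2$ let $\beta(a)$ denote the unique zero of $\sigma \mapsto \zeta(\sigma,a)$ in the interval $(0,1)$. Then $\beta : (0,1/2) \to (0,1)$ is a bijection. -/

import Mathlib

/-!
For `0 < a ≤ b ≤ 1` the series `∑ₙ ((n + a)^{-s} - (n + b)^{-s})` converges locally uniformly on
`re s > 0` (by the mean value theorem its terms are `O((n + a)^{-re s - 1})`), so by the identity
theorem it continues `ζ(s, a) - ζ(s, b)` analytically to that half-plane. For real `σ > 0` and
`a < b` its terms are positive, so `a ↦ ζ(σ, a)` is injective on `(0, 1]`; hence so is `β`.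

For surjectivity fix `σ ∈ (0, 1)`. Since `ζ(s, 1/2) = (2^s - 1) ζ(s)` (the `L`-function of the
trivial character mod `2`), the series with `a = 1/2`, `b = 1` equals `(2^σ - 2) ζ(σ) > 0`, so
`ζ(σ) < 0` and `ζ(σ, 1/2) = (2^σ - 1) ζ(σ) < 0`. On the other hand
`ζ(σ, a) ≥ ζ(σ) + a^{-σ} - 1 → ∞` as `a → 0⁺`, and `a ↦ ζ(σ, a)` is continuous, so the
intermediate value theorem gives a zero `a ∈ (0, 1/2)`, and then `β a = σ`.
-/

open Complex HurwitzZeta Set Filter Topology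

lemma Real.rpow_le_rpow_add_rpow {x p q r : ℝ} (hx : 0 < x) (hpq : p ≤ q) (hqr : q ≤ r) :
    x ^ q ≤ x ^ p + x ^ r := by
  rcases le_or_gt 1 x with h1 | h1
  · exact (Real.rpow_le_rpow_of_exponent_le h1 hqr).trans (le_add_of_nonneg_left (by positivity))
  · exact (Real.rpow_le_rpow_of_exponent_ge hx h1.le hpq).trans
      (le_add_of_nonneg_right (by positivity))

lemma summable_nat_add_rpow {c p : ℝ} (hc : 0 < c) (hp : p < -1) :
    Summable fun n : ℕ => ((n : ℝ) + c) ^ p := by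
  refine ((Real.summable_one_div_nat_add_rpow c (-p)).mpr (by linarith)).congr fun n => ?_
  have hnc : 0 < (n : ℝ) + c := by positivity
  rw [abs_of_pos hnc, one_div, ← Real.rpow_neg hnc.le, neg_neg]

lemma norm_one_div_cpow_sub_one_div_cpow_le {x y : ℝ} (hx : 0 < x) (hxy : x ≤ y) {s : ℂ}
    (hs : 0 ≤ s.re) :
    ‖1 / (x : ℂ) ^ s - 1 / (y : ℂ) ^ s‖ ≤ ‖s‖ * x ^ (-s.re - 1) * (y - x) := by
  rcases eq_or_ne s 0 with rfl | hs0
  · simp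
  have hderiv (t : ℝ) (ht : t ∈ Icc x y) :
      HasDerivWithinAt (fun u : ℝ => (u : ℂ) ^ (-s)) (-s * (t : ℂ) ^ (-s - 1)) (Icc x y) t :=
    (hasDerivAt_ofReal_cpow_const (hx.trans_le ht.1).ne' (neg_ne_zero.2 hs0)).hasDerivWithinAt
  have hbound (t : ℝ) (ht : t ∈ Icc x y) :
      ‖-s * (t : ℂ) ^ (-s - 1)‖ ≤ ‖s‖ * x ^ (-s.re - 1) := by
    rw [norm_mul, norm_neg, norm_cpow_eq_rpow_re_of_pos (hx.trans_le ht.1),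
      show (-s - 1).re = -s.re - 1 by simp]
    exact mul_le_mul_of_nonneg_left (Real.rpow_le_rpow_of_nonpos hx ht.1 (by linarith))
      (norm_nonneg s)
  have := (convex_Icc x y).norm_image_sub_le_of_norm_hasDerivWithin_le hderiv hbound
    (left_mem_Icc.2 hxy) (right_mem_Icc.2 hxy)
  rwa [norm_sub_rev, Real.norm_of_nonneg (sub_nonneg.2 hxy), cpow_neg, cpow_neg, ← one_div,
    ← one_div] at this

lemma norm_hurwitzZeta_term_sub_le {a b : ℝ} (ha : 0 < a) (hab : a ≤ b) {s : ℂ}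
    (hs : 0 ≤ s.re) (n : ℕ) :
    ‖1 / (n + a : ℂ) ^ s - 1 / (n + b : ℂ) ^ s‖ ≤
      ‖s‖ * ((n : ℝ) + a) ^ (-s.re - 1) * (b - a) := by
  have := norm_one_div_cpow_sub_one_div_cpow_le (x := n + a) (y := n + b) (by positivity)
    (by linarith) hs
  push_cast at this
  rwa [add_sub_add_left_eq_sub] at this

lemma differentiableOn_tsum_hurwitzZeta_term_sub {a b : ℝ} (ha : 0 < a) (hab : a ≤ b) :
    DifferentiableOn ℂ (fun s => ∑' n : ℕ, (1 / (n + a : ℂ) ^ s - 1 / (n + b : ℂ) ^ s))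
      {s : ℂ | 0 < s.re} := by
  intro s hs
  set U : Set ℂ := {w | s.re / 2 < w.re} ∩ Metric.ball 0 (‖s‖ + 1)
  have hU : IsOpen U := (isOpen_lt continuous_const continuous_re).inter Metric.isOpen_ball
  have hsU : s ∈ U := ⟨by simp only [mem_ofPred_eq] at hs ⊢; linarith, by simp⟩
  -- on `U` the exponent `-w.re - 1` stays in `[-(‖s‖ + 1) - 1, -(s.re / 2) - 1]`
  set u : ℕ → ℝ := fun n => (‖s‖ + 1) *
    (((n : ℝ) + a) ^ (-(‖s‖ + 1) - 1) + ((n : ℝ) + a) ^ (-(s.re / 2) - 1)) * (b - a)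
  have hu : Summable u := by
    have hs' : 0 < s.re := hs
    exact (((summable_nat_add_rpow ha (by linarith [norm_nonneg s])).add
      (summable_nat_add_rpow ha (by linarith))).mul_left _).mul_right _
  have hterm_diff (n : ℕ) :
      DifferentiableOn ℂ (fun w => 1 / (n + a : ℂ) ^ w - 1 / (n + b : ℂ) ^ w) U := by
    have hterm (c : ℝ) (hc : 0 < c) :
        Differentiable ℂ fun w : ℂ => 1 / (n + c : ℂ) ^ w := by
      have hnc : (n + c : ℂ) ≠ 0 := by exact_mod_cast (by positivity : (0 : ℝ) < n + c).ne'
      exact (differentiable_const 1).div (differentiable_id.const_cpow (.inl hnc))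
        fun w => by simp [hnc]
    exact ((hterm a ha).sub (hterm b (ha.trans_le hab))).differentiableOn
  have hbound (n : ℕ) (w : ℂ) (hw : w ∈ U) :
      ‖1 / (n + a : ℂ) ^ w - 1 / (n + b : ℂ) ^ w‖ ≤ u n := by
    obtain ⟨hw_re, hw_norm⟩ := hw
    simp only [mem_ofPred_eq, Metric.mem_ball, dist_zero_right] at hw_re hw_norm
    have hs' : 0 < s.re := hs
    refine (norm_hurwitzZeta_term_sub_le ha hab (by linarith) n).trans ?_
    have : 0 ≤ b - a := sub_nonneg.2 hab
    simp only [u]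
    gcongr
    exact Real.rpow_le_rpow_add_rpow (by positivity) (by linarith [re_le_norm w]) (by linarith)
  exact ((differentiableOn_tsum_of_summable_norm hu hterm_diff hU hbound).differentiableAt
    (hU.mem_nhds hsU)).differentiableWithinAt

lemma hurwitzZeta_sub_hurwitzZeta_eq_tsum {a b : ℝ} (ha : 0 < a) (hab : a ≤ b) (hb : b ≤ 1)
    {s : ℂ} (hs : 0 < s.re) :
    hurwitzZeta a s - hurwitzZeta b s =
      ∑' n : ℕ, (1 / (n + a : ℂ) ^ s - 1 / (n + b : ℂ) ^ s) := by
  have hopen : IsOpen {s : ℂ | 0 < s.re} := isOpen_lt continuous_const continuous_re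
  have hlhs : AnalyticOnNhd ℂ (fun s => hurwitzZeta a s - hurwitzZeta b s) {s : ℂ | 0 < s.re} :=
    (differentiable_hurwitzZeta_sub_hurwitzZeta _ _).differentiableOn.analyticOnNhd hopen
  have hrhs := (differentiableOn_tsum_hurwitzZeta_term_sub ha hab).analyticOnNhd hopen
  have heq : (fun s => hurwitzZeta a s - hurwitzZeta b s) =ᶠ[𝓝 2]
      fun s => ∑' n : ℕ, (1 / (n + a : ℂ) ^ s - 1 / (n + b : ℂ) ^ s) := by
    filter_upwards [(isOpen_lt continuous_const continuous_re).mem_nhds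
      (show (2 : ℂ) ∈ {s : ℂ | 1 < s.re} by norm_num)] with w hw
    exact ((hasSum_hurwitzZeta_of_one_lt_re ⟨ha.le, hab.trans hb⟩ hw).sub
      (hasSum_hurwitzZeta_of_one_lt_re ⟨ha.le.trans hab, hb⟩ hw)).tsum_eq.symm
  exact hlhs.eqOn_of_preconnected_of_eventuallyEq hrhs (convex_halfSpace_re_gt 0).isPreconnected
    (by norm_num) heq hs

noncomputable def hurwitzDiff (a b σ : ℝ) : ℝ :=
  ∑' n : ℕ, (((n : ℝ) + a) ^ (-σ) - ((n : ℝ) + b) ^ (-σ))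

lemma ofReal_rpow_neg {x : ℝ} (hx : 0 ≤ x) (σ : ℝ) :
    ((x ^ (-σ) : ℝ) : ℂ) = 1 / (x : ℂ) ^ (σ : ℂ) := by
  rw [ofReal_cpow hx, ofReal_neg, cpow_neg, one_div]

lemma hurwitzZeta_sub_hurwitzZeta_eq_hurwitzDiff {a b : ℝ} (ha : 0 < a) (hab : a ≤ b)
    (hb : b ≤ 1) {σ : ℝ} (hσ : 0 < σ) :
    hurwitzZeta a σ - hurwitzZeta b σ = hurwitzDiff a b σ := by
  rw [hurwitzZeta_sub_hurwitzZeta_eq_tsum ha hab hb (by simpa using hσ), hurwitzDiff, ofReal_tsum]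
  refine tsum_congr fun n => ?_
  rw [ofReal_sub, ofReal_rpow_neg (by positivity),
    ofReal_rpow_neg (by linarith [n.cast_nonneg (α := ℝ)])]
  push_cast
  rfl

lemma nat_add_rpow_neg_sub_mem_Icc {a b σ : ℝ} (ha : 0 < a) (hab : a ≤ b) (hσ : 0 ≤ σ)
    (n : ℕ) :
    ((n : ℝ) + a) ^ (-σ) - ((n : ℝ) + b) ^ (-σ) ∈
      Icc 0 (σ * ((n : ℝ) + a) ^ (-σ - 1) * (b - a)) := by
  have hna : 0 < (n : ℝ) + a := by positivity
  have hnonneg : 0 ≤ ((n : ℝ) + a) ^ (-σ) - ((n : ℝ) + b) ^ (-σ) :=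
    sub_nonneg.2 (Real.rpow_le_rpow_of_nonpos hna (by linarith) (by linarith))
  refine ⟨hnonneg, ?_⟩
  have := norm_hurwitzZeta_term_sub_le ha hab (s := σ) (by simpa using hσ) n
  rwa [← ofReal_natCast, ← ofReal_add, ← ofReal_add, ← ofReal_rpow_neg hna.le,
    ← ofReal_rpow_neg (by linarith), ← ofReal_sub, norm_real, Real.norm_of_nonneg hnonneg,
    ofReal_re, norm_real, Real.norm_of_nonneg hσ] at this

lemma summable_nat_add_rpow_neg_sub {a b σ : ℝ} (ha : 0 < a) (hab : a ≤ b) (hσ : 0 < σ) :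
    Summable fun n : ℕ => ((n : ℝ) + a) ^ (-σ) - ((n : ℝ) + b) ^ (-σ) :=
  .of_nonneg_of_le (fun n => (nat_add_rpow_neg_sub_mem_Icc ha hab hσ.le n).1)
    (fun n => (nat_add_rpow_neg_sub_mem_Icc ha hab hσ.le n).2)
    (((summable_nat_add_rpow ha (by linarith)).mul_left σ).mul_right (b - a))

lemma hurwitzDiff_pos {a b σ : ℝ} (ha : 0 < a) (hab : a < b) (hσ : 0 < σ) :
    0 < hurwitzDiff a b σ := by
  refine (summable_nat_add_rpow_neg_sub ha hab.le hσ).tsum_pos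
    (fun n => (nat_add_rpow_neg_sub_mem_Icc ha hab.le hσ.le n).1) 0 ?_
  simpa using Real.rpow_lt_rpow_of_neg ha hab (neg_lt_zero.2 hσ)

lemma continuousOn_hurwitzDiff {b ε σ : ℝ} (hε : 0 < ε) (hσ : 0 < σ) :
    ContinuousOn (fun a => hurwitzDiff a b σ) (Icc ε b) := by
  refine continuousOn_tsum (fun n => ?_)
    (((summable_nat_add_rpow hε (by linarith : -σ - 1 < -1)).mul_left σ).mul_right (b - ε))
    fun n a ha => ?_
  · exact (ContinuousOn.rpow_const (by fun_prop)
      fun a ha => .inl (by linarith [n.cast_nonneg (α := ℝ), ha.1] : (n : ℝ) + a ≠ 0)).sub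
      continuousOn_const
  · have hterm := nat_add_rpow_neg_sub_mem_Icc (hε.trans_le ha.1) ha.2 hσ.le n
    rw [Real.norm_of_nonneg hterm.1]
    have hpow : ((n : ℝ) + a) ^ (-σ - 1) ≤ ((n : ℝ) + ε) ^ (-σ - 1) :=
      Real.rpow_le_rpow_of_nonpos (by positivity) (by linarith [ha.1]) (by linarith)
    exact hterm.2.trans (mul_le_mul (mul_le_mul_of_nonneg_left hpow hσ.le) (by linarith [ha.1])
      (sub_nonneg.2 ha.2) (by positivity))

lemma injOn_hurwitzZeta_ofReal {σ : ℝ} (hσ : 0 < σ) :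
    InjOn (fun a : ℝ => hurwitzZeta a σ) (Ioc 0 1) := by
  intro x hx y hy hxy
  by_contra hne
  wlog hlt : x < y generalizing x y
  · exact this hy hx hxy.symm (Ne.symm hne) ((Ne.symm hne).lt_of_le (not_lt.1 hlt))
  have hdiff := hurwitzZeta_sub_hurwitzZeta_eq_hurwitzDiff hx.1 hlt.le hy.2 hσ
  rw [show hurwitzZeta x σ = hurwitzZeta y σ from hxy, sub_self] at hdiff
  exact (hurwitzDiff_pos hx.1 hlt hσ).ne' (by exact_mod_cast hdiff.symm)

lemma hurwitzZeta_one_half {s : ℂ} (hs : s ≠ 1) :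
    hurwitzZeta ((1 / 2 : ℝ) : UnitAddCircle) s = (2 ^ s - 1) * riemannZeta s := by
  have h := DirichletCharacter.LFunctionTrivChar_eq_mul_riemannZeta (N := 2) hs
  rw [Nat.Prime.primeFactors Nat.prime_two, Finset.prod_singleton] at h
  simp only [DirichletCharacter.LFunctionTrivChar, DirichletCharacter.LFunction,
    ZMod.LFunction] at h
  rw [show (Finset.univ : Finset (ZMod 2)) = {0, 1} from rfl, Finset.sum_pair zero_ne_one,
    MulChar.map_nonunit _ not_isUnit_zero, zero_mul, zero_add, ZMod.toAddCircle_apply,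
    ZMod.val_one, Nat.cast_one] at h
  have h2 : (2 : ℂ) ^ s ≠ 0 := by simp
  rw [cpow_neg] at h
  field_simp at h
  simpa [sub_mul] using h

lemma hurwitzZeta_one : hurwitzZeta ((1 : ℝ) : UnitAddCircle) = riemannZeta := by
  rw [AddCircle.coe_period, hurwitzZeta_zero]

lemma riemannZeta_ofReal_eq {σ : ℝ} (hσ0 : 0 < σ) (hσ1 : σ < 1) :
    riemannZeta σ = ↑(hurwitzDiff (1 / 2) 1 σ / (2 ^ σ - 2)) := by
  have hdiff := hurwitzZeta_sub_hurwitzZeta_eq_hurwitzDiff (a := 1 / 2) (by norm_num)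
    (by norm_num) le_rfl hσ0
  rw [hurwitzZeta_one_half (by exact_mod_cast hσ1.ne), hurwitzZeta_one,
    ← ofReal_ofNat, ← ofReal_cpow zero_le_two] at hdiff
  have h2σ : (2 : ℝ) ^ σ - 2 ≠ 0 := by
    have := Real.rpow_lt_rpow_of_exponent_lt one_lt_two hσ1
    rw [Real.rpow_one] at this
    linarith
  rw [ofReal_div, eq_div_iff (by exact_mod_cast h2σ), ← hdiff]
  push_cast
  ring

lemma hurwitzZeta_ofReal_eq {σ : ℝ} (hσ0 : 0 < σ) (hσ1 : σ < 1) {a : ℝ} (ha : 0 < a)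
    (ha1 : a ≤ 1) :
    hurwitzZeta a σ = ↑(hurwitzDiff (1 / 2) 1 σ / (2 ^ σ - 2) + hurwitzDiff a 1 σ) := by
  have hdiff := hurwitzZeta_sub_hurwitzZeta_eq_hurwitzDiff ha ha1 le_rfl hσ0
  rw [hurwitzZeta_one, riemannZeta_ofReal_eq hσ0 hσ1] at hdiff
  rw [ofReal_add, ← hdiff]
  ring

lemma exists_mem_Ioo_hurwitzZeta_eq_zero {σ : ℝ} (hσ0 : 0 < σ) (hσ1 : σ < 1) :
    ∃ a ∈ Ioo (0 : ℝ) (1 / 2), hurwitzZeta a σ = 0 := by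
  set Z := hurwitzDiff (1 / 2) 1 σ / (2 ^ σ - 2)
  set G : ℝ → ℝ := fun a => Z + hurwitzDiff a 1 σ
  have h2σ : 1 < (2 : ℝ) ^ σ ∧ (2 : ℝ) ^ σ < 2 := by
    simpa using And.intro (Real.rpow_lt_rpow_of_exponent_lt one_lt_two hσ0)
      (Real.rpow_lt_rpow_of_exponent_lt one_lt_two hσ1)
  have hZ : Z < 0 := div_neg_of_pos_of_neg (hurwitzDiff_pos (by norm_num) (by norm_num) hσ0)
    (by linarith)
  have hG_half : G (1 / 2) < 0 := by
    have : G (1 / 2) = ((2 : ℝ) ^ σ - 1) * Z := by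
      simp only [G, Z]
      field_simp [(by linarith : (2 : ℝ) ^ σ - 2 ≠ 0)]
      ring
    rw [this]
    exact mul_neg_of_pos_of_neg (by linarith) hZ
  -- the `n = 0` term `a ^ (-σ) - 1` of `hurwitzDiff a 1 σ` blows up as `a → 0⁺`
  have hG_pos : ∃ a₀ ∈ Ioo (0 : ℝ) (1 / 2), 0 < G a₀ := by
    have hlim := (tendsto_rpow_neg_nhdsGT_zero (neg_lt_zero.2 hσ0)).eventually_gt_atTop (1 - Z)
    obtain ⟨a, hlarge, ha⟩ :=
      (hlim.and (Ioo_mem_nhdsGT (by norm_num : (0 : ℝ) < 1 / 2))).exists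
    have hfirst : a ^ (-σ) - 1 ≤ hurwitzDiff a 1 σ := by
      have hab : a ≤ 1 := by linarith [ha.2]
      simpa [hurwitzDiff] using (summable_nat_add_rpow_neg_sub (b := 1) ha.1 hab hσ0).le_tsum
        0 fun n _ => (nat_add_rpow_neg_sub_mem_Icc ha.1 hab hσ0.le n).1
    exact ⟨a, ha, by simp only [G]; linarith⟩
  obtain ⟨a₀, ha₀, hGa₀⟩ := hG_pos
  have hG_cont : ContinuousOn G (Icc a₀ (1 / 2)) :=
    ((continuousOn_hurwitzDiff ha₀.1 hσ0).mono (Icc_subset_Icc_right (by norm_num))).const_add Z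
  obtain ⟨a, ha, hGa⟩ := intermediate_value_Ioo' ha₀.2.le hG_cont ⟨hG_half, hGa₀⟩
  refine ⟨a, ⟨ha₀.1.trans ha.1, ha.2⟩, ?_⟩
  rw [hurwitzZeta_ofReal_eq hσ0 hσ1 (ha₀.1.trans ha.1) (by linarith [ha.2])]
  exact_mod_cast hGa

/-- If `β : (0,1/2) → (0,1)` assigns to each `a` the unique zero of `σ ↦ ζ(σ, a)` in `(0,1)`,
then `β` is a bijection from `(0,1/2)` onto `(0,1)`. -/
theorem hurwitzZeta_real_zero_bijOn (β : ℝ → ℝ)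
    (hβ : ∀ a ∈ Set.Ioo (0 : ℝ) (1 / 2),
      β a ∈ Set.Ioo (0 : ℝ) 1 ∧ hurwitzZeta (a : UnitAddCircle) (β a : ℂ) = 0 ∧
        ∀ σ ∈ Set.Ioo (0 : ℝ) 1, hurwitzZeta (a : UnitAddCircle) (σ : ℂ) = 0 → σ = β a) :
    Set.BijOn β (Set.Ioo (0 : ℝ) (1 / 2)) (Set.Ioo (0 : ℝ) 1) := by
  refine ⟨fun a ha => (hβ a ha).1, fun x hx y hy hxy => ?_, fun σ hσ => ?_⟩
  · have hsub : Ioo (0 : ℝ) (1 / 2) ⊆ Ioc 0 1 :=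
      Ioo_subset_Ioc_self.trans (Ioc_subset_Ioc_right (by norm_num))
    refine injOn_hurwitzZeta_ofReal (hβ x hx).1.1 (hsub hx) (hsub hy) ?_
    change hurwitzZeta x (β x) = hurwitzZeta y (β x)
    rw [(hβ x hx).2.1, hxy, (hβ y hy).2.1]
  · obtain ⟨a, ha, hzero⟩ := exists_mem_Ioo_hurwitzZeta_eq_zero hσ.1 hσ.2
    exact ⟨a, ha, ((hβ a ha).2.2 σ hσ hzero).symm⟩
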